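/- Let u, h : ℝ³ → ℝ³ be smooth vector fields with div u = div h = 0, and let ω = curl u, ξ = curl h. Then curl(u·∇h − h·∇u) = u·∇ξ − h·∇ω − ξ·∇u + ω·∇h + 2 Σ_{i=1}^{3} ∇u_i × ∇h_i. -/

import Mathlib

noncomputable section

/-- Partial derivative of a scalar function on ℝ³. -/
def pd3 (g : (Fin 3 → ℝ) → ℝ) (i : Fin 3) (p : Fin 3 → ℝ) : ℝ :=
  fderiv ℝ g p (Pi.single i 1)

/-- Divergence of a vector field on ℝ³. -/
def divg (v : (Fin 3 → ℝ) → Fin 3 → ℝ) (p : Fin 3 → ℝ) : ℝ :=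
  ∑ i : Fin 3, pd3 (fun q => v q i) i p

/-- Curl of a vector field on ℝ³. -/
def curl3 (v : (Fin 3 → ℝ) → Fin 3 → ℝ) (p : Fin 3 → ℝ) : Fin 3 → ℝ :=
  ![pd3 (fun q => v q 2) 1 p - pd3 (fun q => v q 1) 2 p,
    pd3 (fun q => v q 0) 2 p - pd3 (fun q => v q 2) 0 p,
    pd3 (fun q => v q 1) 0 p - pd3 (fun q => v q 0) 1 p]

/-- Directional (advective) derivative `(v·∇)w`. -/
def adv (v w : (Fin 3 → ℝ) → Fin 3 → ℝ) (p : Fin 3 → ℝ) : Fin 3 → ℝ :=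
  fun i => ∑ k : Fin 3, v p k * pd3 (fun q => w q i) k p

/-- Cross product in ℝ³. -/
def cross3 (a b : Fin 3 → ℝ) : Fin 3 → ℝ :=
  ![a 1 * b 2 - a 2 * b 1, a 2 * b 0 - a 0 * b 2, a 0 * b 1 - a 1 * b 0]

/-- Gradient of a scalar function on ℝ³. -/
def grad3 (g : (Fin 3 → ℝ) → ℝ) (p : Fin 3 → ℝ) : Fin 3 → ℝ :=
  fun i => pd3 g i p

lemma pd3_contDiff {g : (Fin 3 → ℝ) → ℝ} (hg : ContDiff ℝ (⊤ : ℕ∞) g) (i : Fin 3) :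
    ContDiff ℝ (⊤ : ℕ∞) fun p => pd3 g i p := by
  unfold pd3
  exact (hg.fderiv_right (by simp)).clm_apply contDiff_const

lemma pd3_sub {f g : (Fin 3 → ℝ) → ℝ} {p : Fin 3 → ℝ}
    (hf : DifferentiableAt ℝ f p) (hg : DifferentiableAt ℝ g p) (i : Fin 3) :
    pd3 (fun q => f q - g q) i p = pd3 f i p - pd3 g i p := by
  unfold pd3; rw [fderiv_fun_sub hf hg]; simp

lemma pd3_mul {f g : (Fin 3 → ℝ) → ℝ} {p : Fin 3 → ℝ}
    (hf : DifferentiableAt ℝ f p) (hg : DifferentiableAt ℝ g p) (i : Fin 3) :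
    pd3 (fun q => f q * g q) i p = pd3 f i p * g p + f p * pd3 g i p := by
  unfold pd3; rw [fderiv_fun_mul hf hg]; simp; ring

lemma pd3_sum {F : Fin 3 → (Fin 3 → ℝ) → ℝ} {p : Fin 3 → ℝ}
    (hF : ∀ k, DifferentiableAt ℝ (F k) p) (i : Fin 3) :
    pd3 (fun q => ∑ k : Fin 3, F k q) i p = ∑ k : Fin 3, pd3 (F k) i p := by
  unfold pd3; rw [fderiv_fun_sum fun k _ => hF k]; simp

lemma pd3_pd3 {g : (Fin 3 → ℝ) → ℝ} (hg : ContDiff ℝ (⊤ : ℕ∞) g) (a b : Fin 3) (p : Fin 3 → ℝ) :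
    pd3 (fun q => pd3 g a q) b p = fderiv ℝ (fderiv ℝ g) p (Pi.single b 1) (Pi.single a 1) := by
  unfold pd3
  rw [fderiv_clm_apply (((hg.fderiv_right (m := (⊤ : ℕ∞)) (by simp)).differentiable (by simp)) p)
    (differentiableAt_const _)]
  simp

lemma pd3_comm {g : (Fin 3 → ℝ) → ℝ} (hg : ContDiff ℝ (⊤ : ℕ∞) g) (a b : Fin 3) (p : Fin 3 → ℝ) :
    pd3 (fun q => pd3 g a q) b p = pd3 (fun q => pd3 g b q) a p := by
  rw [pd3_pd3 hg, pd3_pd3 hg]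
  exact hg.contDiffAt.isSymmSndFDerivAt (by rw [minSmoothness_of_isRCLikeNormedField]; exact WithTop.coe_le_coe.mpr (le_top : (2 : ℕ∞) ≤ ⊤)) _ _

lemma adv_contDiff {v w : (Fin 3 → ℝ) → Fin 3 → ℝ}
    (hv : ∀ i, ContDiff ℝ (⊤ : ℕ∞) (fun p => v p i)) (hw : ∀ i, ContDiff ℝ (⊤ : ℕ∞) (fun p => w p i))
    (j : Fin 3) : ContDiff ℝ (⊤ : ℕ∞) fun q => adv v w q j := by
  unfold adv
  exact ContDiff.sum fun k _ => (hv k).mul (pd3_contDiff (hw j) k)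

lemma pd3_adv {v w : (Fin 3 → ℝ) → Fin 3 → ℝ}
    (hv : ∀ i, ContDiff ℝ (⊤ : ℕ∞) (fun p => v p i)) (hw : ∀ i, ContDiff ℝ (⊤ : ℕ∞) (fun p => w p i))
    (j a : Fin 3) (p : Fin 3 → ℝ) :
    pd3 (fun q => adv v w q j) a p
      = ∑ k : Fin 3, (pd3 (fun q => v q k) a p * pd3 (fun q => w q j) k p
          + v p k * pd3 (fun q => pd3 (fun r => w r j) k q) a p) := by
  unfold adv
  rw [pd3_sum (fun k => (show DifferentiableAt ℝ (fun q => v q k * pd3 (fun q => w q j) k q) p from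
      ((hv k).differentiable (by simp) p).mul
      ((pd3_contDiff (hw j) k).differentiable (by simp) p)))]
  exact Finset.sum_congr rfl fun k _ => pd3_mul ((hv k).differentiable (by simp) p)
      ((pd3_contDiff (hw j) k).differentiable (by simp) p) a

/-- For smooth divergence-free `u, h` with `ω = curl u`, `ξ = curl h`:
`curl(u·∇h − h·∇u) = u·∇ξ − h·∇ω − ξ·∇u + ω·∇h + 2 Σᵢ ∇uᵢ × ∇hᵢ`. -/
theorem curl_of_induction_term
    (u h : (Fin 3 → ℝ) → Fin 3 → ℝ)
    (hu : ∀ i, ContDiff ℝ (⊤ : ℕ∞) (fun p => u p i))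
    (hh : ∀ i, ContDiff ℝ (⊤ : ℕ∞) (fun p => h p i))
    (hdivu : ∀ p, divg u p = 0) (hdivh : ∀ p, divg h p = 0) :
    ∀ (p : Fin 3 → ℝ) (i : Fin 3),
      curl3 (fun q j => adv u h q j - adv h u q j) p i
        = adv u (fun q => curl3 h q) p i
          - adv h (fun q => curl3 u q) p i
          - adv (fun q => curl3 h q) u p i
          + adv (fun q => curl3 u q) h p i
          + 2 * ∑ k : Fin 3,
              cross3 (grad3 (fun q => u q k) p) (grad3 (fun q => h q k) p) i := by
  intro p i
  have dpu : ∀ j k : Fin 3, DifferentiableAt ℝ (fun q => pd3 (fun r => u r j) k q) p :=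
    fun j k => (pd3_contDiff (hu j) k).differentiable (by simp) p
  have dph : ∀ j k : Fin 3, DifferentiableAt ℝ (fun q => pd3 (fun r => h r j) k q) p :=
    fun j k => (pd3_contDiff (hh j) k).differentiable (by simp) p
  have dauh : ∀ j : Fin 3, DifferentiableAt ℝ (fun q => adv u h q j) p :=
    fun j => (adv_contDiff hu hh j).differentiable (by simp) p
  have dahu : ∀ j : Fin 3, DifferentiableAt ℝ (fun q => adv h u q j) p :=
    fun j => (adv_contDiff hh hu j).differentiable (by simp) p
  have eu : pd3 (fun q => u q 2) 2 p
      = -pd3 (fun q => u q 0) 0 p - pd3 (fun q => u q 1) 1 p := by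
    have := hdivu p; simp [divg, Fin.sum_univ_three] at this; linarith
  have eh : pd3 (fun q => h q 2) 2 p
      = -pd3 (fun q => h q 0) 0 p - pd3 (fun q => h q 1) 1 p := by
    have := hdivh p; simp [divg, Fin.sum_univ_three] at this; linarith
  have two_eq : (⟨2, by norm_num⟩ : Fin 3) = 2 := rfl
  fin_cases i <;>
  · simp only [Fin.zero_eta, Fin.mk_one, two_eq, curl3, Matrix.cons_val_zero, Matrix.cons_val_one, Matrix.head_cons,
      Matrix.cons_val_two, Matrix.tail_cons, Fin.isValue]
    simp only [pd3_sub (dauh 0) (dahu 0), pd3_sub (dauh 1) (dahu 1), pd3_sub (dauh 2) (dahu 2)]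
    simp only [pd3_adv hu hh, pd3_adv hh hu]
    simp only [adv, grad3, cross3, curl3, Matrix.cons_val_zero, Matrix.cons_val_one,
      Matrix.head_cons, Matrix.cons_val_two, Matrix.tail_cons, Fin.isValue, Fin.sum_univ_three]
    simp only [pd3_sub (dph 2 1) (dph 1 2), pd3_sub (dph 0 2) (dph 2 0),
      pd3_sub (dph 1 0) (dph 0 1), pd3_sub (dpu 2 1) (dpu 1 2), pd3_sub (dpu 0 2) (dpu 2 0),
      pd3_sub (dpu 1 0) (dpu 0 1)]
    simp only [eu, eh, pd3_comm (hu 0) 1 0, pd3_comm (hu 0) 2 0, pd3_comm (hu 0) 2 1,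
      pd3_comm (hu 1) 1 0, pd3_comm (hu 1) 2 0, pd3_comm (hu 1) 2 1,
      pd3_comm (hu 2) 1 0, pd3_comm (hu 2) 2 0, pd3_comm (hu 2) 2 1,
      pd3_comm (hh 0) 1 0, pd3_comm (hh 0) 2 0, pd3_comm (hh 0) 2 1,
      pd3_comm (hh 1) 1 0, pd3_comm (hh 1) 2 0, pd3_comm (hh 1) 2 1,
      pd3_comm (hh 2) 1 0, pd3_comm (hh 2) 2 0, pd3_comm (hh 2) 2 1]
    ring
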